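/- arXiv:1503.07991 — 4 statements merged into one kernel-verified Lean document; each statement's English description precedes it below -/
import Mathlib

section
/- Let n particles initially occupy a connected set of nodes of the triangular grid whose diameter is at most 2√n + 2, and suppose the final configuration is a straight line of n contracted particles (diameter n - 1). Then under any bijection between initial and final positions, the total sum over particles of the grid distance between initial and final position is Ω(n^2). In particular, any algorithm solving line formation from such an initial configuration performs Ω(n^2) movements in the worst case. -/
/-- The infinite equilateral triangular grid graph on `ℤ × ℤ`. -/
def Geqt : SimpleGraph (ℤ × ℤ) :=
  SimpleGraph.fromRel (fun v w => w - v ∈ ({(1, 0), (0, 1), (1, 1)} : Set (ℤ × ℤ)))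

/-- The six lattice directions along which a straight line in the triangular grid can run. -/
def lineDirs : Set (ℤ × ℤ) :=
  {(1, 0), (0, 1), (1, 1), (-1, 0), (0, -1), (-1, -1)}

/-!
Project the grid onto a coordinate `f` along which the final line advances by exactly one per
particle; `f` changes by at most one along a grid edge, so it is 1-Lipschitz for the grid
distance. Pairing the two ends of the line shows that the final positions, projected, lie at
total distance at least `(n² - 1)/4` from any fixed point, here the projection of one initial
particle. Every initial position lies within `2√n + 2` of that particle, so the particles
travel at least `(n² - 1)/4 - n(2√n + 2)` in total, which is at least `n²/16` once
`n ≥ 17²`.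
-/

open Finset

theorem sq_le_four_mul_sum_range_abs_add_mul {α : Type*} [CommRing α] [LinearOrder α]
    [IsStrictOrderedRing α] {e : α} (he : |e| = 1) (n : ℕ) (a : α) :
    (n : α) ^ 2 ≤ 4 * ∑ i ∈ range n, |a + i * e| + 1 := by
  induction n using Nat.twoStepInduction generalizing a with
  | zero => simp
  | one => simp [abs_nonneg]
  | more n ih _ =>
    have hshift : ∀ i : ℕ, a + ((i + 1 : ℕ) : α) * e = a + e + i * e := fun i => by
      push_cast; ring
    have hends : (n + 1 : α) ≤ |a| + |a + e + n * e| :=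
      calc (n + 1 : α) = |(a + e + n * e) - a| := by
            rw [← hshift, add_sub_cancel_left, abs_mul, he, mul_one, Nat.abs_cast]; push_cast; rfl
        _ ≤ |a| + |a + e + n * e| := by rw [add_comm |a|]; exact abs_sub _ _
    have hmid := ih (a + e)
    rw [sum_range_succ, sum_range_succ']
    simp only [hshift, Nat.cast_zero, zero_mul, add_zero]
    push_cast
    linarith

theorem SimpleGraph.Walk.abs_sub_le_length {V : Type*} {G : SimpleGraph V} {f : V → ℝ}
    (hf : ∀ a b, G.Adj a b → |f a - f b| ≤ 1) {u v : V} (W : G.Walk u v) :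
    |f u - f v| ≤ W.length := by
  induction W with
  | nil => simp
  | @cons a b c hab W ih =>
    calc |f a - f c| ≤ |f a - f b| + |f b - f c| := abs_sub_le _ _ _
      _ ≤ 1 + W.length := add_le_add (hf a b hab) ih
      _ = (W.cons hab).length := by push_cast [SimpleGraph.Walk.length_cons]; ring

theorem SimpleGraph.Reachable.abs_sub_le_dist {V : Type*} {G : SimpleGraph V} {f : V → ℝ}
    (hf : ∀ a b, G.Adj a b → |f a - f b| ≤ 1) {u v : V} (h : G.Reachable u v) :
    |f u - f v| ≤ G.dist u v := by
  obtain ⟨W, hW⟩ := h.exists_walk_length_eq_dist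
  exact hW ▸ W.abs_sub_le_length hf

theorem SimpleGraph.reachable_add_zsmul {V : Type*} [AddCommGroup V] {G : SimpleGraph V} {d : V}
    (hd : ∀ v, G.Adj v (v + d)) (v : V) (k : ℤ) : G.Reachable v (v + k • d) := by
  induction k using Int.induction_on with
  | zero => simp
  | succ k ih => exact ih.trans (by simpa [add_smul, add_assoc] using (hd (v + k • d)).reachable)
  | pred k ih =>
    refine ih.trans (SimpleGraph.Adj.reachable (G.adj_symm ?_))
    simpa [sub_smul, add_assoc] using hd (v + (-(k : ℤ) - 1) • d)

namespace Geqt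

theorem adj_add {v d : ℤ × ℤ} (hd : d ∈ ({(1, 0), (0, 1), (1, 1)} : Set (ℤ × ℤ))) :
    Geqt.Adj v (v + d) := by
  refine (SimpleGraph.fromRel_adj _ _ _).2 ⟨?_, Or.inl (by simpa using hd)⟩
  rintro h
  rcases hd with rfl | rfl | rfl <;> simp [Prod.ext_iff] at h

theorem connected : Geqt.Connected := by
  refine (SimpleGraph.connected_iff_exists_forall_reachable _).2 ⟨0, fun v => ?_⟩
  have hx := SimpleGraph.reachable_add_zsmul (fun w => adj_add (d := (1, 0)) (by simp)) 0 v.1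
  have hy := SimpleGraph.reachable_add_zsmul (fun w => adj_add (d := (0, 1)) (by simp))
    (v.1 • (1, 0)) v.2
  simpa using hx.trans (by simpa using hy)

theorem abs_sub_le_one_of_adj {u v : ℤ × ℤ} (h : Geqt.Adj u v) :
    |u.1 - v.1| ≤ 1 ∧ |u.2 - v.2| ≤ 1 := by
  obtain ⟨-, h | h⟩ := (SimpleGraph.fromRel_adj _ _ _).1 h <;>
  · simp only [Set.mem_insert_iff, Set.mem_singleton_iff, Prod.ext_iff, Prod.fst_sub,
      Prod.snd_sub] at h
    constructor <;> rw [abs_le] <;> omega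

theorem abs_fst_sub_le_dist (u v : ℤ × ℤ) : |(u.1 : ℝ) - v.1| ≤ Geqt.dist u v :=
  (connected.preconnected u v).abs_sub_le_dist (f := fun w => (w.1 : ℝ))
    fun a b h => by exact_mod_cast (abs_sub_le_one_of_adj h).1

theorem abs_snd_sub_le_dist (u v : ℤ × ℤ) : |(u.2 : ℝ) - v.2| ≤ Geqt.dist u v :=
  (connected.preconnected u v).abs_sub_le_dist (f := fun w => (w.2 : ℝ))
    fun a b h => by exact_mod_cast (abs_sub_le_one_of_adj h).2

theorem exists_coord_of_mem_lineDirs {d : ℤ × ℤ} (hd : d ∈ lineDirs) :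
    ∃ f : ℤ × ℤ →+ ℝ, (∀ u v, |f u - f v| ≤ Geqt.dist u v) ∧ |f d| = 1 := by
  let fst := (Int.castAddHom ℝ).comp (AddMonoidHom.fst ℤ ℤ)
  let snd := (Int.castAddHom ℝ).comp (AddMonoidHom.snd ℤ ℤ)
  have hfst : ∀ u v, |fst u - fst v| ≤ Geqt.dist u v := abs_fst_sub_le_dist
  have hsnd : ∀ u v, |snd u - snd v| ≤ Geqt.dist u v := abs_snd_sub_le_dist
  rcases hd with rfl | rfl | rfl | rfl | rfl | rfl
  · exact ⟨fst, hfst, by simp [fst]⟩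
  · exact ⟨snd, hsnd, by simp [snd]⟩
  · exact ⟨fst, hfst, by simp [fst]⟩
  · exact ⟨fst, hfst, by simp [fst]⟩
  · exact ⟨snd, hsnd, by simp [snd]⟩
  · exact ⟨fst, hfst, by simp [fst]⟩

end Geqt

theorem SimpleGraph.sum_abs_sub_le_sum_dist_add {V ι : Type*} {G : SimpleGraph V} {f : V → ℝ}
    (hf : ∀ u v, |f u - f v| ≤ G.dist u v) {x y : ι → V} {v₀ : V} {R : ℕ}
    (hx : ∀ i, G.dist (x i) v₀ ≤ R) (s : Finset ι) :
    ∑ i ∈ s, |f (y i) - f v₀| ≤ ∑ i ∈ s, (G.dist (x i) (y i) : ℝ) + s.card * R := by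
  rw [← nsmul_eq_mul, ← sum_const, ← sum_add_distrib]
  refine sum_le_sum fun i _ => ?_
  calc |f (y i) - f v₀| ≤ |f (y i) - f (x i)| + |f (x i) - f v₀| := abs_sub_le _ _ _
    _ ≤ G.dist (y i) (x i) + G.dist (x i) v₀ := add_le_add (hf _ _) (hf _ _)
    _ ≤ G.dist (x i) (y i) + R := by rw [G.dist_comm]; gcongr; exact_mod_cast hx i

theorem Nat.mul_sqrt_add_le {k n : ℕ} (h : (k + 1) ^ 2 ≤ n) : k * Nat.sqrt n + k ≤ n := by
  have hk : k + 1 ≤ Nat.sqrt n := Nat.le_sqrt'.2 h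
  calc k * Nat.sqrt n + k ≤ Nat.sqrt n * Nat.sqrt n := by nlinarith
    _ ≤ n := Nat.sqrt_le n

/-- Lower bound for line formation: there is a constant `c > 0` such that for all large
enough `n`, if `n` particles initially occupy a connected set of nodes of the triangular grid
of diameter at most `2√n + 2`, and finally occupy a straight line of `n` nodes, then under
any bijection between initial and final positions the total grid distance travelled is at
least `c * n²`; in particular any line formation algorithm performs `Ω(n²)` movements. -/
theorem line_formation_lower_bound :
    ∃ c : ℝ, 0 < c ∧ ∃ N : ℕ, ∀ n, N ≤ n →
      ∀ (init fin : Fin n → ℤ × ℤ),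
        Function.Injective init → Function.Injective fin →
        (Geqt.induce (Set.range init)).Connected →
        (∀ i j, Geqt.dist (init i) (init j) ≤ 2 * Nat.sqrt n + 2) →
        (∃ p d, d ∈ lineDirs ∧ ∀ i : Fin n, fin i = p + ((i : ℕ) : ℤ) • d) →
        c * (n : ℝ) ^ 2 ≤ ∑ i, (Geqt.dist (init i) (fin i) : ℝ) := by
  refine ⟨1 / 16, by norm_num, 289, ?_⟩
  rintro n hn init fin - - - hdiam ⟨p, d, hd, hfin⟩
  obtain ⟨f, hf, hfd⟩ := Geqt.exists_coord_of_mem_lineDirs hd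
  let i₀ : Fin n := ⟨0, by omega⟩
  have hline : ∀ i : Fin n, f (fin i) - f (init i₀) = f p - f (init i₀) + (i : ℕ) * f d := by
    intro i; rw [hfin, map_add, map_zsmul, zsmul_eq_mul, Int.cast_natCast]; ring
  have hspread := sq_le_four_mul_sum_range_abs_add_mul hfd n (f p - f (init i₀))
  have htravel :=
    SimpleGraph.sum_abs_sub_le_sum_dist_add hf (y := fin) (fun i => hdiam i i₀) univ
  rw [← Fin.sum_univ_eq_sum_range (fun i => |f p - f (init i₀) + i * f d|)] at hspread
  simp only [hline, card_univ, Fintype.card_fin] at htravel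
  have hsqrt : (16 * Nat.sqrt n + 16 : ℝ) ≤ n := by exact_mod_cast Nat.mul_sqrt_add_le (k := 16) hn
  push_cast at htravel
  nlinarith
end

section
/- In any reachable configuration of the spanning forest algorithm, if a maximal set of expanded particles forms a chain p_0, p_1, ..., p_k in a tree of the forest where each p_{i+1} is a child of p_i blocked from contracting, then the chain ends at a leaf of the forest, which can contract; hence by induction every expanded particle eventually contracts (Lemma 8). Abstractly: in a finite forest where every non-leaf 'blocked' node has a blocked child, every maximal descending chain of blocked nodes reaches a leaf, and leaves are never blocked; therefore the set of blocked nodes admits no infinite descending chain, so under fair scheduling every blocked node is eventually unblocked. -/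
/-! The parent relation of a finite forest with no directed cycle is well-founded, and every
blocked particle has a blocked child, i.e. a blocked predecessor for this relation; well-founded
induction along it therefore shows that no particle is blocked. -/

open Relation

theorem Finite.wellFounded_of_not_transGen_self {α : Type*} [Finite α] {r : α → α → Prop}
    (h : ∀ a, ¬ TransGen r a a) : WellFounded r :=
  haveI : Std.Irrefl (TransGen r) := ⟨h⟩
  Subrelation.wf TransGen.single (Finite.wellFounded_of_trans_of_irrefl (TransGen r))

theorem WellFounded.forall_not_of_exists_rel {α : Type*} {r : α → α → Prop} (hr : WellFounded r)
    {p : α → Prop} (hp : ∀ a, p a → ∃ b, r b a ∧ p b) : ∀ a, ¬ p a :=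
  fun a => hr.induction (C := fun x => ¬ p x) a fun x ih hx =>
    let ⟨b, hbx, hb⟩ := hp x hx
    ih b hbx hb

/-- Lemma 8 (abstract well-foundedness form): in a finite forest of particles given by a
parent-pointer map with no directed cycle, suppose every 'blocked' (expanded, unable to
contract) particle has a blocked child; since a leaf has no children (and hence is never
blocked) and the forest is finite and acyclic, a descending chain of blocked nodes cannot
exist, so in fact no particle is blocked — hence every expanded particle can, and under fair
scheduling eventually does, contract. -/
theorem no_blocked_particles {V : Type*} [Fintype V] (parent : V → Option V)
    (hacyc : ¬ ∃ v, Relation.TransGen (fun a b => parent a = some b) v v)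
    (blocked : V → Prop)
    (hdesc : ∀ v, blocked v → ∃ c, parent c = some v ∧ blocked c) :
    ∀ v, ¬ blocked v :=
  (Finite.wellFounded_of_not_transGen_self (not_exists.mp hacyc)).forall_not_of_exists_rel hdesc
end

section
/- For any candidate c with segment of maximal length l on the cycle, c covers every candidate c' with d(c', c) < l, and c itself is not covered by any candidate; moreover |seg(c)| ≥ |seg(pred(c))| fails to trigger withdrawal, i.e., the candidate with the (weakly) longest segment never withdraws its candidacy in subphase 1. Consequently (safety), at least one candidate always remains on the cycle corresponding to the outer boundary. -/
/-- `n` candidates sit on a cycle in cyclic order, indexed by `ZMod n`; `s j` is the length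
of the segment following candidate `j`. `cycDist n s j m` is the number of agents strictly
between candidate `j` and the candidate `m` positions further along the cycle direction
(the segments in between plus the `m - 1` intermediate candidates). -/
def cycDist (n : ℕ) (s : ZMod n → ℕ) (j : ZMod n) (m : ℕ) : ℕ :=
  (∑ t ∈ Finset.range m, s (j + (t : ZMod n))) + (m - 1)

theorem le_cycDist {n : ℕ} (s : ZMod n → ℕ) (j : ZMod n) {m : ℕ} (hm : 1 ≤ m) :
    s j ≤ cycDist n s j m :=
  calc s j = s (j + ((0 : ℕ) : ZMod n)) := by simp
    _ ≤ ∑ t ∈ Finset.range m, s (j + (t : ZMod n)) :=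
      Finset.single_le_sum (f := fun t : ℕ => s (j + (t : ZMod n))) (fun _ _ => Nat.zero_le _)
        (Finset.mem_range.2 hm)
    _ ≤ cycDist n s j m := Nat.le_add_right _ _

theorem not_cycDist_lt_of_forall_le {n : ℕ} {s : ZMod n → ℕ} {i₀ : ZMod n}
    (hmax : ∀ j, s j ≤ s i₀) {m : ℕ} (hm : 1 ≤ m) :
    ¬ cycDist n s i₀ m < s (i₀ + (m : ZMod n)) :=
  not_lt.2 ((hmax _).trans (le_cycDist s i₀ hm))

theorem max_segment_candidate_survives_general (n : ℕ) (s : ZMod n → ℕ)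
    (i₀ : ZMod n) (hmax : ∀ j, s j ≤ s i₀) :
    (∀ (j : ZMod n) (m : ℕ), 1 ≤ m → m ≤ n → j + (m : ZMod n) = i₀ →
      cycDist n s j m < s i₀ → s i₀ > cycDist n s j m) ∧
    (∀ m : ℕ, 1 ≤ m → m ≤ n → ¬ (cycDist n s i₀ m < s (i₀ + (m : ZMod n)))) ∧
    s (i₀ - 1) ≤ s i₀ ∧
    (∃ j : ZMod n,
      (∀ m : ℕ, 1 ≤ m → m ≤ n → ¬ (cycDist n s j m < s (j + (m : ZMod n)))) ∧
      ¬ (s j < s (j - 1))) := by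
  have not_covered : ∀ m : ℕ, 1 ≤ m → m ≤ n → ¬ (cycDist n s i₀ m < s (i₀ + (m : ZMod n))) :=
    fun _ hm _ => not_cycDist_lt_of_forall_le hmax hm
  exact ⟨fun _ _ _ _ _ h => h, not_covered, hmax _, i₀, not_covered, not_lt.2 (hmax _)⟩

/-- Lemma 1 (safety): let `i₀` be a candidate whose segment length is (weakly) maximal.
Then (1) `i₀` covers every candidate `c'` with `d(c', i₀) < s i₀` (by definition of
covering); (2) `i₀` is not covered by any candidate, i.e. no candidate `i₀ + m` has
`d(i₀, i₀ + m) < s (i₀ + m)`; (3) the back segment of `i₀` is not longer than its front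
segment. Consequently some candidate (one of maximal segment length) survives subphase 1:
it is not covered and its front segment is not shorter than its back segment. -/
theorem max_segment_candidate_survives (n : ℕ) [NeZero n] (s : ZMod n → ℕ)
    (i₀ : ZMod n) (hmax : ∀ j, s j ≤ s i₀) :
    (∀ (j : ZMod n) (m : ℕ), 1 ≤ m → m ≤ n → j + (m : ZMod n) = i₀ →
      cycDist n s j m < s i₀ → s i₀ > cycDist n s j m) ∧
    (∀ m : ℕ, 1 ≤ m → m ≤ n → ¬ (cycDist n s i₀ m < s (i₀ + (m : ZMod n)))) ∧
    s (i₀ - 1) ≤ s i₀ ∧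
    (∃ j : ZMod n,
      (∀ m : ℕ, 1 ≤ m → m ≤ n → ¬ (cycDist n s j m < s (j + (m : ZMod n)))) ∧
      ¬ (s j < s (j - 1))) :=
  max_segment_candidate_survives_general n s i₀ hmax
end

section
/- In the geometric amoebot model, the successor/predecessor rule for agents on a boundary yields a well-defined set of disjoint cycles: for each agent a (a particle together with one of its adjacent empty regions), defining succ(a) by scanning the neighbors of a's node clockwise starting from the empty region and taking the first occupied node, and pred(a) by the analogous counter-clockwise scan, the functions succ and pred are mutually inverse bijections on the set of agents, so the agents decompose into disjoint cycles. -/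
/-- The six unit directions of the triangular grid in clockwise cyclic order, indexed by
`ZMod 6`, so that the neighbors of a node `v` are `v + vec6 d` for `d : ZMod 6`. -/
def vec6 (d : ZMod 6) : ℤ × ℤ :=
  ![((1 : ℤ), (0 : ℤ)), (1, 1), (0, 1), (-1, 0), (-1, -1), (0, -1)] ⟨d.val, d.val_lt⟩

/-- An agent of the particle structure `A`: a particle at node `v ∈ A` together with one of
the maximal arcs of empty nodes in its local neighborhood (i.e. one of the empty regions in
its local view), represented canonically by the clockwise-last empty direction `d` of the
arc: `v + vec6 d` is empty and `v + vec6 (d + 1)` is occupied. -/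
def Agent (A : Set (ℤ × ℤ)) : Type :=
  {p : (ℤ × ℤ) × ZMod 6 // p.1 ∈ A ∧ p.1 + vec6 p.2 ∉ A ∧ p.1 + vec6 (p.2 + 1) ∈ A}

/-- `SuccRel A a b` holds iff `b` is the successor of agent `a`: scanning the neighbors of
`a`'s node clockwise starting from its empty region, the first occupied node is
`w = v + vec6 (d + 1)`, and `b` is the agent of `w` for the arc of `w`'s neighborhood
containing the empty node the scan came from; its clockwise-last empty direction is
`d + j - 1`, where `j` is the first offset with `w + vec6 (d + j)` occupied. -/
def SuccRel (A : Set (ℤ × ℤ)) (a b : Agent A) : Prop :=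
  ∃ j : ℕ, (∀ i : ℕ, i < j → a.1.1 + vec6 (a.1.2 + 1) + vec6 (a.1.2 + (i : ZMod 6)) ∉ A) ∧
    a.1.1 + vec6 (a.1.2 + 1) + vec6 (a.1.2 + (j : ZMod 6)) ∈ A ∧
    b.1.1 = a.1.1 + vec6 (a.1.2 + 1) ∧
    b.1.2 = a.1.2 + (j : ZMod 6) - 1

/-- `PredRel A a b` holds iff `b` is the predecessor of agent `a`: scanning the neighbors of
`a`'s node counter-clockwise starting from its empty region, the directions
`d, d - 1, ..., d - m` are all empty and `v + vec6 (d - m - 1)` is the first occupied node;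
`b` is the corresponding agent of that node, with direction `d - m + 1`. -/
def PredRel (A : Set (ℤ × ℤ)) (a b : Agent A) : Prop :=
  ∃ m : ℕ, (∀ i : ℕ, i ≤ m → a.1.1 + vec6 (a.1.2 - (i : ZMod 6)) ∉ A) ∧
    a.1.1 + vec6 (a.1.2 - (m : ZMod 6) - 1) ∈ A ∧
    b.1.1 = a.1.1 + vec6 (a.1.2 - (m : ZMod 6) - 1) ∧
    b.1.2 = a.1.2 - (m : ZMod 6) + 1

/-!
Every particle has an occupied neighbor (connectivity and `2 ≤ |A|`), so both scans stop
within six steps and the first stopping index is unique. The successor scan of the agent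
`(v, d)` walks clockwise around `w = v + vec6 (d + 1)` through empty nodes, starting at the
empty node `v + vec6 d` (a common neighbor of `v` and `w`), and stops at the first occupied
node. Running the predecessor scan from the resulting agent of `w` retraces these empty nodes
counter-clockwise, and the first occupied node it meets is `v` itself, adjacent to `w` in
direction `d + 1 + 3`; symmetrically for the other composition.
-/

lemma vec6_add_three : ∀ x : ZMod 6, vec6 (x + 3) = -vec6 x := by decide

lemma vec6_sub_three : ∀ x : ZMod 6, vec6 (x - 3) = -vec6 x := by decide

lemma vec6_add_one_add_vec6_sub_one : ∀ x : ZMod 6, vec6 (x + 1) + vec6 (x - 1) = vec6 x := by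
  decide

lemma add_vec6_add_vec6_add_three (v : ℤ × ℤ) (x : ZMod 6) :
    v + vec6 x + vec6 (x + 3) = v := by
  rw [vec6_add_three]; abel

lemma add_vec6_add_vec6_sub_three (v : ℤ × ℤ) (x : ZMod 6) :
    v + vec6 x + vec6 (x - 3) = v := by
  rw [vec6_sub_three]; abel

lemma add_vec6_add_one_add_vec6_sub_one (v : ℤ × ℤ) (x : ZMod 6) :
    v + vec6 (x + 1) + vec6 (x - 1) = v + vec6 x := by
  rw [add_assoc, vec6_add_one_add_vec6_sub_one]

lemma exists_vec6_eq {x : ℤ × ℤ} (hx : x ∈ ({(1, 0), (0, 1), (1, 1)} : Set (ℤ × ℤ))) :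
    ∃ e, vec6 e = x := by
  rcases hx with rfl | rfl | rfl
  exacts [⟨0, by decide⟩, ⟨2, by decide⟩, ⟨1, by decide⟩]

lemma exists_eq_add_vec6_of_geqt_adj {v w : ℤ × ℤ} (h : Geqt.Adj v w) :
    ∃ e, w = v + vec6 e := by
  obtain ⟨-, h | h⟩ := SimpleGraph.fromRel_adj _ _ _ |>.1 h
  · obtain ⟨e, he⟩ := exists_vec6_eq h
    exact ⟨e, by rw [he]; abel⟩
  · obtain ⟨e, he⟩ := exists_vec6_eq h
    exact ⟨e + 3, by rw [vec6_add_three, he]; abel⟩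

lemma exists_add_vec6_mem {A : Set (ℤ × ℤ)} (hconn : (Geqt.induce A).Connected)
    (hcard : 2 ≤ A.ncard) {v : ℤ × ℤ} (hv : v ∈ A) : ∃ e, v + vec6 e ∈ A := by
  obtain ⟨u, hu, hne⟩ := Set.exists_ne_of_one_lt_ncard hcard v
  obtain ⟨p⟩ := hconn.preconnected ⟨v, hv⟩ ⟨u, hu⟩
  have hnil : ¬p.Nil := SimpleGraph.Walk.not_nil_of_ne fun h => hne (congrArg Subtype.val h).symm
  obtain ⟨e, he⟩ := exists_eq_add_vec6_of_geqt_adj (p.adj_snd hnil)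
  exact ⟨e, he ▸ (p.getVert 1).2⟩

lemma isLeast_of_forall_lt_not {p : ℕ → Prop} {n : ℕ} (hn : p n) (hlt : ∀ i < n, ¬p i) :
    IsLeast {i | p i} n :=
  ⟨hn, fun _ hi => not_lt.1 fun h => hlt _ h hi⟩

section Agents

variable {A : Set (ℤ × ℤ)}

lemma exists_succRel (hnbr : ∀ v ∈ A, ∃ e, v + vec6 e ∈ A) (a : Agent A) :
    ∃ b, SuccRel A a b := by
  classical
  obtain ⟨⟨v, d⟩, -, hd, hw⟩ := a
  set w := v + vec6 (d + 1)
  have hex : ∃ j : ℕ, w + vec6 (d + j) ∈ A := by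
    obtain ⟨e, he⟩ := hnbr w hw
    exact ⟨(e - d).val, by rwa [ZMod.natCast_zmod_val, add_sub_cancel]⟩
  set j := Nat.find hex
  have hmin : ∀ i < j, w + vec6 (d + i) ∉ A := fun _ => Nat.find_min hex
  -- the node scanned just before the first occupied one, or `v + vec6 d` if there is none
  have hempty : w + vec6 (d + j - 1) ∉ A := by
    rcases eq_or_ne j 0 with h0 | hj
    · rwa [h0, Nat.cast_zero, add_zero, add_vec6_add_one_add_vec6_sub_one]
    · obtain ⟨k, hk⟩ := Nat.exists_eq_add_one_of_ne_zero hj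
      rw [hk, Nat.cast_succ, ← add_assoc, add_sub_cancel_right]
      exact hmin k (by omega)
  exact ⟨⟨(w, d + j - 1), hw, hempty, by rw [sub_add_cancel]; exact Nat.find_spec hex⟩,
    j, hmin, Nat.find_spec hex, rfl, rfl⟩

lemma SuccRel.unique {a b c : Agent A} (hb : SuccRel A a b) (hc : SuccRel A a c) : b = c := by
  obtain ⟨j₁, hlt₁, hj₁, hv₁, hd₁⟩ := hb
  obtain ⟨j₂, hlt₂, hj₂, hv₂, hd₂⟩ := hc
  have hj : j₁ = j₂ :=
    (isLeast_of_forall_lt_not hj₁ hlt₁).unique (isLeast_of_forall_lt_not hj₂ hlt₂)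
  exact Subtype.ext (Prod.ext (hv₁.trans hv₂.symm) (by rw [hd₁, hd₂, hj]))

lemma exists_predRel (hnbr : ∀ v ∈ A, ∃ e, v + vec6 e ∈ A) (a : Agent A) :
    ∃ b, PredRel A a b := by
  classical
  obtain ⟨⟨v, d⟩, hv, hd, -⟩ := a
  have hex : ∃ m : ℕ, v + vec6 (d - m - 1) ∈ A := by
    obtain ⟨e, he⟩ := hnbr v hv
    exact ⟨(d - 1 - e).val, by rwa [ZMod.natCast_zmod_val, sub_right_comm, sub_sub_cancel]⟩
  set m := Nat.find hex
  have hempty : ∀ i ≤ m, v + vec6 (d - i) ∉ A := by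
    rintro (_ | i) hi
    · rwa [Nat.cast_zero, sub_zero]
    · rw [Nat.cast_succ, ← sub_sub]
      exact Nat.find_min hex hi
  have hu := Nat.find_spec hex
  refine ⟨⟨(v + vec6 (d - m - 1), d - m + 1), hu, ?_, ?_⟩, m, hempty, hu, rfl, rfl⟩
  · rw [add_right_comm, add_vec6_add_one_add_vec6_sub_one]
    exact hempty m le_rfl
  · rwa [show d - m + 1 + 1 = d - m - 1 + 3 by ring, add_vec6_add_vec6_add_three]

lemma PredRel.unique {a b c : Agent A} (hb : PredRel A a b) (hc : PredRel A a c) : b = c := by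
  obtain ⟨m₁, hle₁, hm₁, hv₁, hd₁⟩ := hb
  obtain ⟨m₂, hle₂, hm₂, hv₂, hd₂⟩ := hc
  -- the scan stops at offset `m + 1`, the first occupied one
  have hleast : ∀ m : ℕ, (∀ i ≤ m, a.1.1 + vec6 (a.1.2 - i) ∉ A) →
      a.1.1 + vec6 (a.1.2 - m - 1) ∈ A →
      IsLeast {i : ℕ | a.1.1 + vec6 (a.1.2 - i) ∈ A} (m + 1) := fun m hle hm =>
    isLeast_of_forall_lt_not (by rwa [Nat.cast_succ, ← sub_sub])
      fun i hi => hle i (Nat.lt_succ_iff.1 hi)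
  obtain rfl : m₁ = m₂ :=
    Nat.succ_injective ((hleast _ hle₁ hm₁).unique (hleast _ hle₂ hm₂))
  exact Subtype.ext (Prod.ext (hv₁.trans hv₂.symm) (hd₁.trans hd₂.symm))

lemma SuccRel.predRel : ∀ {a b : Agent A}, SuccRel A a b → PredRel A b a := by
  rintro ⟨⟨v, d⟩, hv, hd, _⟩ ⟨⟨w, e⟩, _⟩ ⟨j, hlt, -, hw, he⟩
  dsimp only [PredRel] at hv hd hlt hw he ⊢
  subst hw he
  have hback : v + vec6 (d + 1) + vec6 (d + j - 1 - j - 1) = v := by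
    rw [show d + j - 1 - j - 1 = d + 1 - 3 by ring, add_vec6_add_vec6_sub_three]
  refine ⟨j, fun i hi => ?_, by rwa [hback], hback.symm, by ring⟩
  rcases hi.lt_or_eq with hi | rfl
  · have hrefl : d + j - 1 - i = d + (j - 1 - i : ℕ) := by
      rw [Nat.cast_sub (by omega), Nat.cast_sub (by omega)]; ring
    rw [hrefl]
    exact hlt _ (by omega)
  · rwa [add_sub_right_comm, add_sub_cancel_right, add_vec6_add_one_add_vec6_sub_one]

lemma PredRel.succRel : ∀ {a b : Agent A}, PredRel A a b → SuccRel A b a := by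
  rintro ⟨⟨v, d⟩, _, _, hd₁⟩ ⟨⟨u, e⟩, _⟩ ⟨m, hle, -, hu, he⟩
  dsimp only [SuccRel] at hd₁ hle hu he ⊢
  subst hu he
  have hback : v + vec6 (d - m - 1) + vec6 (d - m + 1 + 1) = v := by
    rw [show d - m + 1 + 1 = d - m - 1 + 3 by ring, add_vec6_add_vec6_add_three]
  refine ⟨m, fun i hi => ?_, ?_, hback.symm, by ring⟩
  · have hrefl : d - m + 1 + i = d - (m - 1 - i : ℕ) := by
      rw [Nat.cast_sub (by omega), Nat.cast_sub (by omega)]; ring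
    rw [hback, hrefl]
    exact hle _ (by omega)
  · rwa [hback, show d - m + 1 + m = d + 1 by ring]

end Agents

theorem boundary_cycles_well_defined_general (A : Set (ℤ × ℤ))
    (hconn : (Geqt.induce A).Connected) (hcard : 2 ≤ A.ncard) :
    (∀ a : Agent A, ∃! b, SuccRel A a b) ∧
    (∀ a : Agent A, ∃! b, PredRel A a b) ∧
    (∀ a b : Agent A, SuccRel A a b ↔ PredRel A b a) := by
  have hnbr : ∀ v ∈ A, ∃ e, v + vec6 e ∈ A := fun _ => exists_add_vec6_mem hconn hcard
  refine ⟨fun a => ?_, fun a => ?_, fun a b => ⟨SuccRel.predRel, PredRel.succRel⟩⟩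
  · obtain ⟨b, hb⟩ := exists_succRel hnbr a
    exact ⟨b, hb, fun c hc => hc.unique hb⟩
  · obtain ⟨b, hb⟩ := exists_predRel hnbr a
    exact ⟨b, hb, fun c hc => hc.unique hb⟩

/-- For a finite connected particle structure `A` with at least two particles, the
clockwise successor scan and the counter-clockwise predecessor scan define functions on the
set of agents (each agent has a unique successor and a unique predecessor), and these are
mutually inverse; hence `succ` is a permutation of the agents and the agents decompose
into disjoint cycles (the boundary cycles). -/
theorem boundary_cycles_well_defined (A : Set (ℤ × ℤ)) (hfin : A.Finite)
    (hconn : (Geqt.induce A).Connected) (hcard : 2 ≤ A.ncard) :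
    (∀ a : Agent A, ∃! b, SuccRel A a b) ∧
    (∀ a : Agent A, ∃! b, PredRel A a b) ∧
    (∀ a b : Agent A, SuccRel A a b ↔ PredRel A b a) :=
  boundary_cycles_well_defined_general A hconn hcard
end
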